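/- (Proposition 1: deterministic proximal-gradient variational inference with fixed step size β = α/L.) Let f : E → ℝ be differentiable with L-Lipschitz gradient (L > 0), let h : E → ℝ be convex on S, let α > 0, let t ≥ 1, and let λ : ℕ → E satisfy: λ₀ ∈ S, and for every k < t, λ_{k+1} ∈ S minimizes λ ↦ ⟨λ, ∇f(λ_k)⟩ + h(λ) + (L/α)·D(λ, λ_k) over S, h is differentiable at λ_{k+1}, the map λ ↦ D(λ, λ_k) is differentiable at λ_{k+1}, and ⟨λ_{k+1} − λ_k, ∇₁D(λ_{k+1}, λ_k)⟩ ≥ α·‖λ_{k+1} − λ_k‖². Suppose 𝓛* ∈ ℝ satisfies −(f(λ) + h(λ)) ≤ 𝓛* for all λ ∈ S, and set C₀ := 𝓛* + f(λ₀) + h(λ₀) and G_k := (L/α)·(λ_k − λ_{k+1}). Then min over k ∈ {0, 1, …, t−1} of ‖G_k‖² is at most 2·L·C₀ / (α²·t). -/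

import Mathlib

open scoped RealInnerProductSpace

/-!
Each proximal step decreases `f + h` by at least `(L/2)‖λ_{k+1} − λ_k‖²`: the descent lemma
for the `L`-smooth `f` loses at most `(L/2)‖λ_{k+1} − λ_k‖²`, while the first-order optimality
condition of the step, combined with the lower bound on `⟨λ_{k+1} − λ_k, ∇₁D(λ_{k+1}, λ_k)⟩`,
gains `L‖λ_{k+1} − λ_k‖²`. Since `f + h ≥ −𝓛*` on `S`, telescoping over `t` steps gives
`∑_{k<t} ‖λ_{k+1} − λ_k‖² ≤ 2C₀/L`, and the minimum of `‖G_k‖² = (L/α)²‖λ_{k+1} − λ_k‖²` is at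
most its average.
-/

open Set Finset

theorem HasFDerivAt.hasDerivAt_comp_add_smul {E F : Type*} [NormedAddCommGroup E]
    [NormedSpace ℝ E] [NormedAddCommGroup F] [NormedSpace ℝ F] {f : E → F} {f' : E →L[ℝ] F}
    {x v : E} {s : ℝ} (hf : HasFDerivAt f f' (x + s • v)) :
    HasDerivAt (fun s : ℝ => f (x + s • v)) (f' v) s := by
  simpa [Function.comp_def] using
    hf.comp_hasDerivAt s (((hasDerivAt_id s).smul_const v).const_add x)

theorem ConvexOn.sub_add_fderiv_nonneg_of_isMinOn {F : Type*} [NormedAddCommGroup F]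
    [NormedSpace ℝ F] {S : Set F} {φ ψ : F → ℝ} {ψ' : F →L[ℝ] ℝ} {a b : F}
    (hφ : ConvexOn ℝ S φ) (hψ : HasFDerivAt ψ ψ' b) (hmin : IsMinOn (φ + ψ) S b)
    (ha : a ∈ S) (hb : b ∈ S) : 0 ≤ φ a - φ b + ψ' (a - b) := by
  set v := a - b
  -- along the segment, `φ` is replaced by its chord, which is smooth and still lies above it
  set χ : ℝ → ℝ := fun s => ψ (b + s • v) + s * (φ a - φ b)
  have hχ : HasDerivAt χ (ψ' v + (φ a - φ b)) 0 := by
    have hψ0 : HasFDerivAt ψ ψ' (b + (0 : ℝ) • v) := by simpa using hψ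
    exact (hψ0.hasDerivAt_comp_add_smul.add
      ((hasDerivAt_id (0 : ℝ)).mul_const (φ a - φ b))).congr_deriv (by rw [one_mul])
  have hχmin : IsMinOn χ (Icc 0 1) 0 := by
    intro s ⟨hs0, hs1⟩
    have hy : b + s • v = (1 - s) • b + s • a := by simp only [v]; module
    have hyS : b + s • v ∈ S := hy ▸ hφ.1 hb ha (by linarith) hs0 (by ring)
    have hchord : φ (b + s • v) ≤ (1 - s) * φ b + s * φ a :=
      hy ▸ hφ.2 hb ha (by linarith) hs0 (by ring)
    have := hmin hyS
    simp only [Set.mem_ofPred_eq, Pi.add_apply] at this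
    simp only [χ, zero_smul, add_zero, zero_mul, Set.mem_ofPred_eq]
    linarith
  have hdir : (1 : ℝ) ∈ posTangentConeAt (Icc 0 1) (0 : ℝ) :=
    mem_posTangentConeAt_of_segment_subset (by simp [segment_eq_Icc])
  simpa [add_comm] using
    hχmin.localize.hasFDerivWithinAt_nonneg hχ.hasFDerivAt.hasFDerivWithinAt hdir

theorem le_add_deriv_add_half_of_deriv_sub_le {g g' : ℝ → ℝ} {M : ℝ}
    (hg : ∀ s, HasDerivAt g (g' s) s) (hg' : ∀ s ∈ Icc (0 : ℝ) 1, g' s - g' 0 ≤ M * s) :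
    g 1 ≤ g 0 + g' 0 + M / 2 := by
  set φ : ℝ → ℝ := fun s => M * s ^ 2 / 2 + s * g' 0 - g s
  have hφ : ∀ s, HasDerivAt φ (M * s + g' 0 - g' s) s := fun s =>
    (((((hasDerivAt_pow 2 s).const_mul M).div_const 2).add
      ((hasDerivAt_id s).mul_const (g' 0))).sub (hg s)).congr_deriv (by ring)
  have hmono : MonotoneOn φ (Icc 0 1) := by
    refine monotoneOn_of_deriv_nonneg (convex_Icc 0 1)
      (fun s _ => (hφ s).continuousAt.continuousWithinAt)
      (fun s _ => (hφ s).differentiableAt.differentiableWithinAt) fun s hs => ?_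
    rw [(hφ s).deriv]
    linarith [hg' s (interior_subset hs)]
  have := hmono (left_mem_Icc.2 zero_le_one) (right_mem_Icc.2 zero_le_one) zero_le_one
  simp only [φ] at this
  linarith

theorem Finset.inf'_le_sum_div_card {ι : Type*} {s : Finset ι} (hs : s.Nonempty) (u : ι → ℝ) :
    s.inf' hs u ≤ (∑ i ∈ s, u i) / #s := by
  rw [le_div_iff₀ (by simpa using hs.card_pos), mul_comm, ← nsmul_eq_mul]
  exact card_nsmul_le_sum _ _ _ fun i hi => inf'_le _ hi

section InnerProductSpace

variable {E : Type*} [NormedAddCommGroup E] [InnerProductSpace ℝ E] [CompleteSpace E]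

theorem le_add_inner_gradient_add_of_lipschitz_gradient {f : E → ℝ} {L : ℝ}
    (hf : Differentiable ℝ f) (hlip : ∀ x y : E, ‖gradient f x - gradient f y‖ ≤ L * ‖x - y‖)
    (x y : E) : f y ≤ f x + ⟪gradient f x, y - x⟫ + L / 2 * ‖y - x‖ ^ 2 := by
  set v := y - x
  have hline : ∀ s : ℝ, HasDerivAt (fun s : ℝ => f (x + s • v))
      ⟪gradient f (x + s • v), v⟫ s := fun s => by
    simpa using ((hf _).hasGradientAt.hasFDerivAt).hasDerivAt_comp_add_smul
  have hgrowth : ∀ s ∈ Icc (0 : ℝ) 1,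
      ⟪gradient f (x + s • v), v⟫ - ⟪gradient f (x + (0 : ℝ) • v), v⟫ ≤ L * ‖v‖ ^ 2 * s := by
    intro s hs
    rw [zero_smul, add_zero, ← inner_sub_left]
    calc ⟪gradient f (x + s • v) - gradient f x, v⟫
        ≤ ‖gradient f (x + s • v) - gradient f x‖ * ‖v‖ := real_inner_le_norm _ _
      _ ≤ L * ‖x + s • v - x‖ * ‖v‖ := by gcongr; exact hlip _ _
      _ = L * ‖v‖ ^ 2 * s := by
        rw [add_sub_cancel_left, norm_smul, Real.norm_of_nonneg hs.1]; ring
  have := le_add_deriv_add_half_of_deriv_sub_le hline hgrowth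
  simp only [zero_smul, one_smul, add_zero, v, add_sub_cancel] at this
  linarith

theorem proximal_step_sufficient_decrease {S : Set E} {f h d : E → ℝ} {L α : ℝ} (hL : 0 ≤ L)
    (hα : 0 < α) (hf : Differentiable ℝ f)
    (hlip : ∀ x y : E, ‖gradient f x - gradient f y‖ ≤ L * ‖x - y‖) (hconv : ConvexOn ℝ S h)
    {a b : E} (ha : a ∈ S) (hb : b ∈ S)
    (hmin : ∀ y ∈ S, ⟪b, gradient f a⟫ + h b + (L / α) * d b ≤
      ⟪y, gradient f a⟫ + h y + (L / α) * d y)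
    (hd : DifferentiableAt ℝ d b)
    (hd_coercive : α * ‖b - a‖ ^ 2 ≤ ⟪b - a, gradient d b⟫) :
    L / 2 * ‖b - a‖ ^ 2 ≤ (f a + h a) - (f b + h b) := by
  have hlin : ConvexOn ℝ S fun y => ⟪y, gradient f a⟫ :=
    ((innerSL ℝ (gradient f a)).toLinearMap.convexOn hconv.1).congr fun y _ => real_inner_comm _ _
  have hoptimal := (hlin.add hconv).sub_add_fderiv_nonneg_of_isMinOn
    (hd.hasGradientAt.hasFDerivAt.const_mul (L / α)) hmin ha hb
  have hcurv : (L / α) * ⟪gradient d b, a - b⟫ ≤ -(L * ‖b - a‖ ^ 2) := by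
    have : ⟪gradient d b, a - b⟫ = -⟪b - a, gradient d b⟫ := by
      rw [real_inner_comm, ← inner_neg_left, neg_sub]
    rw [this, mul_neg, neg_le_neg_iff]
    calc L * ‖b - a‖ ^ 2 = (L / α) * (α * ‖b - a‖ ^ 2) := by field_simp
      _ ≤ (L / α) * ⟪b - a, gradient d b⟫ := by gcongr
  have hdescent := le_add_inner_gradient_add_of_lipschitz_gradient hf hlip a b
  have hlinear : ⟪a, gradient f a⟫ - ⟪b, gradient f a⟫ = -⟪gradient f a, b - a⟫ := by
    rw [← inner_sub_left, real_inner_comm, ← inner_neg_right, neg_sub]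
  simp only [Pi.add_apply, smul_apply, InnerProductSpace.toDual_apply_apply, smul_eq_mul]
    at hoptimal
  linarith

end InnerProductSpace

/-- Proposition 1: deterministic proximal-gradient variational inference with the
fixed step size `β = α/L`:
`min_{k < t} ‖G_k‖² ≤ 2LC₀/(α²t)`, where `G_k := (L/α)·(λ_k − λ_{k+1})` and
`C₀ := 𝓛* + f(λ₀) + h(λ₀)`. -/
theorem stmt_3 {E : Type*} [NormedAddCommGroup E] [InnerProductSpace ℝ E] [CompleteSpace E]
    (S : Set E)
    (h : E → ℝ) (D : E → E → ℝ)
    (f : E → ℝ) (L : ℝ) (hL : 0 < L)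
    (hf : Differentiable ℝ f)
    (hlip : ∀ x y : E, ‖gradient f x - gradient f y‖ ≤ L * ‖x - y‖)
    (hconv : ConvexOn ℝ S h)
    (α : ℝ) (hα : 0 < α) (t : ℕ) (ht : 1 ≤ t)
    (lam : ℕ → E)
    (hlam0 : lam 0 ∈ S)
    (hmem : ∀ k < t, lam (k + 1) ∈ S)
    (hmin : ∀ k < t, ∀ y ∈ S,
      ⟪lam (k + 1), gradient f (lam k)⟫ + h (lam (k + 1)) +
          (L / α) * D (lam (k + 1)) (lam k) ≤
        ⟪y, gradient f (lam k)⟫ + h y + (L / α) * D y (lam k))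
    (hDdiff : ∀ k < t, DifferentiableAt ℝ (fun x => D x (lam k)) (lam (k + 1)))
    (hA6 : ∀ k < t,
      ⟪lam (k + 1) - lam k, gradient (fun x => D x (lam k)) (lam (k + 1))⟫ ≥
        α * ‖lam (k + 1) - lam k‖ ^ 2)
    (Lstar : ℝ) (hLstar : ∀ x ∈ S, -(f x + h x) ≤ Lstar) :
    (Finset.range t).inf' (Finset.nonempty_range_iff.mpr (by omega))
        (fun k => ‖(L / α) • (lam k - lam (k + 1))‖ ^ 2) ≤
      2 * L * (Lstar + f (lam 0) + h (lam 0)) / (α ^ 2 * t) := by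
  have hmemS : ∀ k ≤ t, lam k ∈ S
    | 0, _ => hlam0
    | k + 1, hk => hmem k hk
  set F : ℕ → ℝ := fun k => f (lam k) + h (lam k)
  have hdecrease : ∀ k ∈ range t, L / 2 * ‖lam (k + 1) - lam k‖ ^ 2 ≤ F k - F (k + 1) :=
    fun k hk => have hk := mem_range.1 hk
      proximal_step_sufficient_decrease hL.le hα hf hlip hconv (hmemS k hk.le) (hmem k hk)
        (hmin k hk) (hDdiff k hk) (hA6 k hk)
  have hsum : ∑ k ∈ range t, L / 2 * ‖lam (k + 1) - lam k‖ ^ 2 ≤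
      Lstar + f (lam 0) + h (lam 0) :=
    calc _ ≤ ∑ k ∈ range t, (F k - F (k + 1)) := sum_le_sum hdecrease
      _ = F 0 - F t := sum_range_sub' F t
      _ ≤ _ := by linarith [hLstar (lam t) (hmemS t le_rfl)]
  have hG : ∀ k, ‖(L / α) • (lam k - lam (k + 1))‖ ^ 2 =
      2 * L / α ^ 2 * (L / 2 * ‖lam (k + 1) - lam k‖ ^ 2) := fun k => by
    rw [norm_smul, norm_sub_rev, Real.norm_of_nonneg (div_pos hL hα).le]
    field_simp
  calc _ ≤ (∑ k ∈ range t, ‖(L / α) • (lam k - lam (k + 1))‖ ^ 2) / #(range t) :=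
        inf'_le_sum_div_card _ _
    _ = 2 * L / α ^ 2 * (∑ k ∈ range t, L / 2 * ‖lam (k + 1) - lam k‖ ^ 2) / t := by
        simp_rw [hG, ← mul_sum, card_range]
    _ ≤ 2 * L / α ^ 2 * (Lstar + f (lam 0) + h (lam 0)) / t := by gcongr
    _ = _ := by ring
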